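/- With θ ∈ (0,1] and ε > 0, the function V(x) := exp(εθΨ(−x) + Ψ_ε(x)) satisfies the second-order bound Σᵢ λ̃ᵢ ∂²V/∂xᵢ²(x) ≤ ε((3/2)(ε+θ) + εC̄)·V(x) for all x ∈ ℝ^m. -/

import Mathlib

open scoped BigOperators

/-- The piecewise function ψ. -/
noncomputable def psiFn (t : ℝ) : ℝ :=
  if t ≤ -1 then -(1/2)
  else if t ≤ 0 then (t+1)^3 - (1/2)*(t+1)^4 - 1/2
  else t

/-- ψ_ε(t) := ψ(εt). -/
noncomputable def psiE (ε t : ℝ) : ℝ := psiFn (ε * t)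

/-- Ψ(x) := Σᵢ ψ(xᵢ)/μᵢ. -/
noncomputable def bigPsi {m : ℕ} (μ : Fin m → ℝ) (x : Fin m → ℝ) : ℝ :=
  ∑ i, psiFn (x i) / μ i

/-- Ψ_ε(x) := Σᵢ ψ_ε(xᵢ)/μᵢ. -/
noncomputable def bigPsiE {m : ℕ} (μ : Fin m → ℝ) (ε : ℝ) (x : Fin m → ℝ) : ℝ :=
  ∑ i, psiE ε (x i) / μ i

/-- The drift b(x,u) with bᵢ(x,u) = −ρμᵢ/m − μᵢ(xᵢ − ⟨e,x⟩⁺uᵢ) − γᵢ⟨e,x⟩⁺uᵢ. -/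
noncomputable def drift {m : ℕ} (ρ : ℝ) (μ γ : Fin m → ℝ) (x u : Fin m → ℝ) :
    Fin m → ℝ :=
  fun i => -(ρ * μ i / m) - μ i * (x i - max (∑ j, x j) 0 * u i)
    - γ i * max (∑ j, x j) 0 * u i

/-- The extended generator L_u f(x) = Σᵢ λ̃ᵢ ∂²f/∂xᵢ²(x) + ⟨b(x,u), ∇f(x)⟩. -/
noncomputable def genL {m : ℕ} (lam : Fin m → ℝ) (ρ : ℝ) (μ γ : Fin m → ℝ)
    (u : Fin m → ℝ) (f : (Fin m → ℝ) → ℝ) (x : Fin m → ℝ) : ℝ :=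
  ∑ i, lam i * fderiv ℝ (fun y => fderiv ℝ f y (Pi.single i 1)) x (Pi.single i 1)
    + fderiv ℝ f x (drift ρ μ γ x u)

/-- ‖x‖₁ = Σᵢ|xᵢ|. -/
noncomputable def norm1 {m : ℕ} (x : Fin m → ℝ) : ℝ := ∑ i, |x i|

/-- ‖x⁻‖₁ = Σᵢ max(−xᵢ,0). -/
noncomputable def norm1neg {m : ℕ} (x : Fin m → ℝ) : ℝ := ∑ i, max (-(x i)) 0

/-! The exponent of `V` is a sum of one-variable terms `gᵢ(xᵢ)`, so `∂ᵢ²V = (gᵢ'' + gᵢ'²) V`.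
As `ψ' ∈ [0, 1]`, the two summands of `gᵢ'` have opposite signs and absolute value at most `ε/μᵢ`,
so `gᵢ'² ≤ ε²/μᵢ²`; as `ψ'' ≤ 3/2`, `gᵢ'' ≤ (3/2)(εθ + ε²)/μᵢ`. Weighting by `λ̃ᵢ` and using
`Σ λ̃ᵢ/μᵢ = 1` gives the bound. -/

open Set

lemma hasDerivAt_ite_le {f g f' g' : ℝ → ℝ} {a : ℝ} (hf : ∀ t, HasDerivAt f (f' t) t)
    (hg : ∀ t, HasDerivAt g (g' t) t) (hfg : f a = g a) (hfg' : f' a = g' a) (t : ℝ) :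
    HasDerivAt (fun s => if s ≤ a then f s else g s) (if t ≤ a then f' t else g' t) t := by
  set F := fun s => if s ≤ a then f s else g s
  have hFf : EqOn F f (Iic a) := fun s hs => if_pos hs
  have hFg : EqOn F g (Ici a) := fun s hs => by
    rcases (mem_Ici.1 hs).eq_or_lt with rfl | h
    · simp [F, hfg]
    · simp [F, not_le.2 h]
  rcases lt_trichotomy t a with h | rfl | h
  · rw [if_pos h.le]
    exact (hf t).congr_of_eventuallyEq (Filter.mem_of_superset (Iic_mem_nhds h) hFf)
  · rw [if_pos le_rfl]
    have hleft := (hf t).hasDerivWithinAt.congr hFf (hFf self_mem_Iic)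
    have hright := (hg t).hasDerivWithinAt.congr hFg (hFg self_mem_Ici)
    rw [← hfg'] at hright
    simpa [Iic_union_Ici] using hleft.union hright
  · rw [if_neg h.not_ge]
    exact (hg t).congr_of_eventuallyEq (Filter.mem_of_superset (Ioi_mem_nhds h) fun s hs =>
      hFg (mem_Ici_of_Ioi hs))

noncomputable def psiDeriv (t : ℝ) : ℝ :=
  if t ≤ -1 then 0 else if t ≤ 0 then 3 * (t + 1) ^ 2 - 2 * (t + 1) ^ 3 else 1

noncomputable def psiDeriv2 (t : ℝ) : ℝ :=
  if t ≤ -1 then 0 else if t ≤ 0 then 6 * (t + 1) - 6 * (t + 1) ^ 2 else 0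

lemma hasDerivAt_psiFn (t : ℝ) : HasDerivAt psiFn (psiDeriv t) t := by
  have hpoly (s : ℝ) : HasDerivAt (fun s => (s + 1) ^ 3 - (1 / 2) * (s + 1) ^ 4 - 1 / 2)
      (3 * (s + 1) ^ 2 - 2 * (s + 1) ^ 3) s := by
    have hs := (hasDerivAt_id' s).add_const 1
    refine (((hs.fun_pow 3).fun_sub ((hs.fun_pow 4).const_mul (1 / 2))).sub_const
      (1 / 2)).congr_deriv ?_
    push_cast
    ring
  exact hasDerivAt_ite_le (fun s => hasDerivAt_const s _)
    (hasDerivAt_ite_le hpoly hasDerivAt_id' (by norm_num) (by norm_num))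
    (by norm_num) (by norm_num) t

lemma hasDerivAt_psiDeriv (t : ℝ) : HasDerivAt psiDeriv (psiDeriv2 t) t := by
  have hpoly (s : ℝ) : HasDerivAt (fun s => 3 * (s + 1) ^ 2 - 2 * (s + 1) ^ 3)
      (6 * (s + 1) - 6 * (s + 1) ^ 2) s := by
    have hs := (hasDerivAt_id' s).add_const 1
    refine (((hs.fun_pow 2).const_mul 3).fun_sub ((hs.fun_pow 3).const_mul 2)).congr_deriv ?_
    push_cast
    ring
  exact hasDerivAt_ite_le (fun s => hasDerivAt_const s _)
    (hasDerivAt_ite_le hpoly (fun s => hasDerivAt_const s _) (by norm_num) (by norm_num))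
    (by norm_num) (by norm_num) t

lemma psiDeriv_mem_Icc (t : ℝ) : psiDeriv t ∈ Icc 0 1 := by
  unfold psiDeriv
  split_ifs with h₁ h₂
  · simp
  · push Not at h₁
    have hcubic : 0 ≤ t ^ 2 * (3 + 2 * t) := mul_nonneg (sq_nonneg t) (by linarith)
    constructor <;> nlinarith [sq_nonneg (t + 1)]
  · simp

lemma psiDeriv2_le (t : ℝ) : psiDeriv2 t ≤ 3 / 2 := by
  unfold psiDeriv2
  split_ifs <;> nlinarith [sq_nonneg (t + 1 / 2)]

noncomputable def coordExponent (φ : ℝ → ℝ) (a b ε c t : ℝ) : ℝ :=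
  (a * φ (-t) + b * φ (ε * t)) / c

lemma hasDerivAt_coordExponent {φ φ' : ℝ → ℝ} (hφ : ∀ t, HasDerivAt φ (φ' t) t)
    (a b ε c t : ℝ) :
    HasDerivAt (coordExponent φ a b ε c) (coordExponent φ' (-a) (ε * b) ε c t) t := by
  have hneg : HasDerivAt (fun s => φ (-s)) (φ' (-t) * -1) t :=
    (hφ (-t)).comp t (hasDerivAt_neg t)
  have hmul : HasDerivAt (fun s => φ (ε * s)) (φ' (ε * t) * (ε * 1)) t :=
    (hφ (ε * t)).comp t ((hasDerivAt_id' t).const_mul ε)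
  refine (((hneg.const_mul a).fun_add (hmul.const_mul b)).div_const c).congr_deriv ?_
  unfold coordExponent
  ring

lemma coordExponent_le {φ : ℝ → ℝ} {K a b c : ℝ} (hφ : ∀ t, φ t ≤ K) (ha : 0 ≤ a) (hb : 0 ≤ b)
    (hc : 0 ≤ c) (ε t : ℝ) : coordExponent φ a b ε c t ≤ (a + b) * K / c := by
  unfold coordExponent
  gcongr
  nlinarith [mul_le_mul_of_nonneg_left (hφ (-t)) ha, mul_le_mul_of_nonneg_left (hφ (ε * t)) hb]

lemma sq_coordExponent_le {φ : ℝ → ℝ} (hφ : ∀ t, φ t ∈ Icc 0 1) {ε θ : ℝ} (hε : 0 ≤ ε)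
    (hθ : 0 ≤ θ) (hθ1 : θ ≤ 1) (c t : ℝ) :
    coordExponent φ (-(ε * θ)) ε ε c t ^ 2 ≤ ε ^ 2 / c ^ 2 := by
  unfold coordExponent
  rw [div_pow]
  refine div_le_div_of_nonneg_right ?_ (sq_nonneg c)
  obtain ⟨h₁, h₂⟩ := hφ (-t)
  obtain ⟨h₃, h₄⟩ := hφ (ε * t)
  have hθφ : θ * φ (-t) ≤ 1 := by nlinarith
  apply sq_le_sq' <;> nlinarith [mul_nonneg hε (mul_nonneg hθ h₁)]

lemma coordExponent_deriv2_add_sq_le {ε θ c : ℝ} (hε : 0 < ε) (hθ : 0 < θ) (hθ1 : θ ≤ 1)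
    (hc : 0 < c) (t : ℝ) :
    coordExponent psiDeriv2 (ε * θ) (ε * ε) ε c t + coordExponent psiDeriv (-(ε * θ)) ε ε c t ^ 2
      ≤ (ε * θ + ε * ε) * (3 / 2) / c + ε ^ 2 / c ^ 2 :=
  add_le_add (coordExponent_le psiDeriv2_le (mul_pos hε hθ).le (mul_pos hε hε).le hc.le ε t)
    (sq_coordExponent_le psiDeriv_mem_Icc hε.le hθ.le hθ1 c t)

section SecondPartial

variable {ι : Type*} [Fintype ι] {g g' g'' : ι → ℝ → ℝ}

lemma hasFDerivAt_sum_comp_apply (hg : ∀ i t, HasDerivAt (g i) (g' i t) t) (y : ι → ℝ) :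
    HasFDerivAt (fun w : ι → ℝ => ∑ j, g j (w j))
      (∑ j, g' j (y j) • (ContinuousLinearMap.proj j : (ι → ℝ) →L[ℝ] ℝ)) y :=
  HasFDerivAt.fun_sum fun j _ => (hg j (y j)).comp_hasFDerivAt y (hasFDerivAt_apply j y)

lemma fderiv_exp_sum_comp_apply_single [DecidableEq ι] (hg : ∀ i t, HasDerivAt (g i) (g' i t) t)
    (y : ι → ℝ) (i : ι) :
    fderiv ℝ (fun w => Real.exp (∑ j, g j (w j))) y (Pi.single i 1)
      = g' i (y i) * Real.exp (∑ j, g j (y j)) := by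
  rw [(hasFDerivAt_sum_comp_apply hg y).exp.fderiv]
  simp [Pi.single_apply, mul_comm]

lemma fderiv_fderiv_exp_sum_comp_apply_single [DecidableEq ι]
    (hg : ∀ i t, HasDerivAt (g i) (g' i t) t) (hg' : ∀ i t, HasDerivAt (g' i) (g'' i t) t)
    (x : ι → ℝ) (i : ι) :
    fderiv ℝ (fun y => fderiv ℝ (fun w => Real.exp (∑ j, g j (w j))) y (Pi.single i 1)) x
        (Pi.single i 1)
      = (g'' i (x i) + g' i (x i) ^ 2) * Real.exp (∑ j, g j (x j)) := by
  simp only [fderiv_exp_sum_comp_apply_single hg]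
  have hprod : HasFDerivAt (fun y => g' i (y i) * Real.exp (∑ j, g j (y j))) _ x :=
    ((hg' i (x i)).comp_hasFDerivAt x (hasFDerivAt_apply i x)).fun_mul
      (hasFDerivAt_sum_comp_apply hg x).exp
  rw [hprod.fderiv]
  simp only [Function.comp_apply, add_apply, smul_apply, sum_apply, ContinuousLinearMap.proj_apply,
    Pi.single_apply, smul_eq_mul, mul_ite, mul_one, mul_zero, Finset.sum_ite_eq', Finset.mem_univ,
    if_true]
  ring

end SecondPartial

lemma exponent_eq_sum_coordExponent {m : ℕ} (μ : Fin m → ℝ) (ε θ : ℝ) (w : Fin m → ℝ) :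
    ε * θ * bigPsi μ (-w) + bigPsiE μ ε w = ∑ i, coordExponent psiFn (ε * θ) 1 ε (μ i) (w i) := by
  simp only [bigPsi, bigPsiE, psiE, coordExponent, Finset.mul_sum, ← Finset.sum_add_distrib,
    Pi.neg_apply]
  congr! 1 with i
  ring

theorem stmt6_general {m : ℕ} (μ lam : Fin m → ℝ)
    (hμ : ∀ i, 0 < μ i) (hlam : ∀ i, 0 < lam i)
    (hsum : ∑ i, lam i / μ i = 1)
    (θ ε : ℝ) (hθ : 0 < θ) (hθ1 : θ ≤ 1) (hε : 0 < ε) (x : Fin m → ℝ) :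
    ∑ i, lam i *
        fderiv ℝ
          (fun y => fderiv ℝ (fun w => Real.exp (ε * θ * bigPsi μ (-w) + bigPsiE μ ε w))
            y (Pi.single i 1)) x (Pi.single i 1)
      ≤ ε * ((3/2) * (ε + θ) + ε * ∑ i, lam i / (μ i)^2)
          * Real.exp (ε * θ * bigPsi μ (-x) + bigPsiE μ ε x) := by
  have hg (i : Fin m) (t : ℝ) := by
    simpa only [mul_one] using hasDerivAt_coordExponent hasDerivAt_psiFn (ε * θ) 1 ε (μ i) t
  have hg' (i : Fin m) (t : ℝ) := by
    simpa only [neg_neg] using hasDerivAt_coordExponent hasDerivAt_psiDeriv (-(ε * θ)) ε ε (μ i) t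
  simp only [exponent_eq_sum_coordExponent, fderiv_fderiv_exp_sum_comp_apply_single hg hg']
  set V := Real.exp (∑ i, coordExponent psiFn (ε * θ) 1 ε (μ i) (x i))
  calc _ ≤ ∑ i, lam i * (((ε * θ + ε * ε) * (3 / 2) / μ i + ε ^ 2 / μ i ^ 2) * V) :=
        Finset.sum_le_sum fun i _ => mul_le_mul_of_nonneg_left (mul_le_mul_of_nonneg_right
          (coordExponent_deriv2_add_sq_le hε hθ hθ1 (hμ i) (x i)) (Real.exp_pos _).le) (hlam i).le
    _ = ((ε * θ + ε * ε) * (3 / 2) * V) * ∑ i, lam i / μ i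
          + (ε ^ 2 * V) * ∑ i, lam i / μ i ^ 2 := by
      rw [Finset.mul_sum, Finset.mul_sum, ← Finset.sum_add_distrib]
      congr! 1 with i
      ring
    _ = _ := by
      rw [hsum]
      ring

/-- the second-order bound
Σᵢ λ̃ᵢ ∂²V/∂xᵢ²(x) ≤ ε((3/2)(ε+θ) + εC̄)·V(x) for V(x) = exp(εθΨ(−x)+Ψ_ε(x)). -/
theorem stmt6 {m : ℕ} (hm : 1 ≤ m) (μ lam : Fin m → ℝ)
    (hμ : ∀ i, 0 < μ i) (hlam : ∀ i, 0 < lam i)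
    (hsum : ∑ i, lam i / μ i = 1)
    (θ ε : ℝ) (hθ : 0 < θ) (hθ1 : θ ≤ 1) (hε : 0 < ε) (x : Fin m → ℝ) :
    ∑ i, lam i *
        fderiv ℝ
          (fun y => fderiv ℝ (fun w => Real.exp (ε * θ * bigPsi μ (-w) + bigPsiE μ ε w))
            y (Pi.single i 1)) x (Pi.single i 1)
      ≤ ε * ((3/2) * (ε + θ) + ε * ∑ i, lam i / (μ i)^2)
          * Real.exp (ε * θ * bigPsi μ (-x) + bigPsiE μ ε x) :=
  stmt6_general μ lam hμ hlam hsum θ ε hθ hθ1 hε x
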